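/- arXiv:1404.7029 — 8 statements merged into one kernel-verified Lean document; each statement's English description precedes it below -/
import Mathlib

section
/- Let x, y : ℝ≥0 → V be continuous paths in a real inner product space V, β a nonzero linear form on V, β^∨ = 2β/⟨β,β⟩ (identified with a vector via the inner product), and n > 0. If x(t) = y(t) + log(1 + (1/n)∫₀ᵗ e^{-β(y(s))} ds)·β^∨ for all t ≥ 0, then for all t ≥ 0 one has (1 + (1/n)∫₀ᵗ e^{-β(y(s))} ds)·(1 - (1/n)∫₀ᵗ e^{-β(x(s))} ds) = 1; in particular ∫₀ᵗ e^{-β(x(s))} ds < n for all t. -/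
open MeasureTheory Real

/-- Inversion lemma, statement (1) ⇒ (3): if
`x t = y t + log (1 + (1/n) ∫₀ᵗ e^{-β(y s)} ds) • β∨`, then
`(1 + (1/n) ∫₀ᵗ e^{-β(y)}) * (1 - (1/n) ∫₀ᵗ e^{-β(x)}) = 1` and in particular
`∫₀ᵗ e^{-β(x)} < n` for all `t ≥ 0`. -/
theorem inversion_lemma_product_identity
    {V : Type*} [NormedAddCommGroup V] [InnerProductSpace ℝ V] [FiniteDimensional ℝ V]
    (β : V →L[ℝ] ℝ) (hβ : β ≠ 0)
    (βvee : V) (hβvee : βvee = (2 / ‖β‖ ^ 2) • ((InnerProductSpace.toDual ℝ V).symm β))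
    (n : ℝ) (hn : 0 < n)
    (x y : ℝ → V) (hx : Continuous x) (hy : Continuous y)
    (hxy : ∀ t, 0 ≤ t →
      x t = y t + Real.log (1 + (1 / n) * ∫ s in (0:ℝ)..t, Real.exp (-β (y s))) • βvee) :
    ∀ t, 0 ≤ t →
      (1 + (1 / n) * ∫ s in (0:ℝ)..t, Real.exp (-β (y s))) *
        (1 - (1 / n) * ∫ s in (0:ℝ)..t, Real.exp (-β (x s))) = 1 ∧
      (∫ s in (0:ℝ)..t, Real.exp (-β (x s))) < n := by
  -- β applied to βvee is 2
  have hnormβ : ‖β‖ ≠ 0 := norm_ne_zero_iff.mpr hβ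
  have hβv : β βvee = 2 := by
    have h1 : β ((InnerProductSpace.toDual ℝ V).symm β) = ‖β‖ ^ 2 := by
      rw [← InnerProductSpace.toDual_symm_apply (y := β)
        (x := (InnerProductSpace.toDual ℝ V).symm β),
        real_inner_self_eq_norm_sq, LinearIsometryEquiv.norm_map]
    rw [hβvee, ContinuousLinearMap.map_smul, smul_eq_mul, h1]
    field_simp
  set f : ℝ → ℝ := fun s => Real.exp (-β (y s)) with hfdef
  have hfc : Continuous f := Real.continuous_exp.comp ((β.continuous.comp hy).neg)
  set F : ℝ → ℝ := fun t => ∫ s in (0:ℝ)..t, f s with hFdef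
  set u : ℝ → ℝ := fun t => 1 + (1 / n) * F t with hudef
  have hupos : ∀ s, 0 ≤ s → 0 < u s := by
    intro s hs
    have hF : 0 ≤ F s := intervalIntegral.integral_nonneg hs (fun _ _ => (Real.exp_pos _).le)
    have : 0 ≤ (1 / n) * F s := mul_nonneg (by positivity) hF
    simp only [hudef]; linarith
  -- pointwise identity for the integrand of x
  have hxint : ∀ s, 0 ≤ s → Real.exp (-β (x s)) = f s / (u s) ^ 2 := by
    intro s hs
    have hus := hupos s hs
    have hβx : β (x s) = β (y s) + Real.log (u s) * 2 := by
      rw [hxy s hs, map_add, ContinuousLinearMap.map_smul, smul_eq_mul, hβv]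
    rw [hβx]
    have hexp : Real.exp (Real.log (u s) * 2) = (u s) ^ 2 := by
      rw [mul_two, Real.exp_add, Real.exp_log hus, sq]
    rw [neg_add, Real.exp_add, Real.exp_neg (Real.log (u s) * 2), hexp, hfdef]
    ring
  -- the antiderivative
  have hFd : ∀ s : ℝ, HasDerivAt F (f s) s := fun s =>
    (hfc.integral_hasStrictDerivAt 0 s).hasDerivAt
  have hud : ∀ s : ℝ, HasDerivAt u ((1 / n) * f s) s := fun s =>
    ((hFd s).const_mul (1 / n)).const_add 1
  intro t ht
  have hφd : ∀ s ∈ Set.uIcc (0:ℝ) t,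
      HasDerivAt (fun r => n * (1 - (u r)⁻¹)) (Real.exp (-β (x s))) s := by
    intro s hs
    rw [Set.uIcc_of_le ht] at hs
    have hs0 : 0 ≤ s := hs.1
    have hus := hupos s hs0
    have h1 : HasDerivAt (fun r => (u r)⁻¹) (-((1 / n) * f s) / (u s) ^ 2) s :=
      (hud s).inv hus.ne'
    have h2 : HasDerivAt (fun r => n * (1 - (u r)⁻¹))
        (n * (0 - (-((1 / n) * f s) / (u s) ^ 2))) s :=
      (((hasDerivAt_const s (1:ℝ)).sub h1).const_mul n)
    convert h2 using 1
    rw [hxint s hs0]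
    field_simp
    ring
  have hxc : Continuous fun s => Real.exp (-β (x s)) :=
    Real.continuous_exp.comp ((β.continuous.comp hx).neg)
  have key : (∫ s in (0:ℝ)..t, Real.exp (-β (x s)))
      = (fun r => n * (1 - (u r)⁻¹)) t - (fun r => n * (1 - (u r)⁻¹)) 0 :=
    intervalIntegral.integral_eq_sub_of_hasDerivAt hφd (hxc.intervalIntegrable 0 t)
  have hu0 : u 0 = 1 := by simp [hudef, hFdef]
  have key' : (∫ s in (0:ℝ)..t, Real.exp (-β (x s))) = n * (1 - (u t)⁻¹) := by
    rw [key]; simp [hu0]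
  have hut := hupos t ht
  constructor
  · show u t * (1 - (1 / n) * ∫ s in (0:ℝ)..t, Real.exp (-β (x s))) = 1
    rw [key']
    field_simp
    ring
  · rw [key']
    have : 0 < (u t)⁻¹ := inv_pos.mpr hut
    nlinarith
end

section
/- With the setup of the inversion lemma (V, β, β^∨, n > 0 as before): x(t) = y(t) + log(1 + (1/n)∫₀ᵗ e^{-β(y)})·β^∨ for all t holds if and only if (∫₀ᵗ e^{-β(x)} < n for all t > 0 and y(t) = x(t) + log(1 - (1/n)∫₀ᵗ e^{-β(x)})·β^∨ for all t). -/
open MeasureTheory Real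

lemma aux_integral (f : ℝ → ℝ) (hf : Continuous f) (b : ℝ) (hb : b ≠ 0) (t : ℝ) (ht : 0 ≤ t)
    (hne : ∀ s ∈ Set.Icc (0:ℝ) t, 1 + b * ∫ u in (0:ℝ)..s, f u ≠ 0) :
    ∫ s in (0:ℝ)..t, f s / (1 + b * ∫ u in (0:ℝ)..s, f u)^2
      = (1/b) * (1 - (1 + b * ∫ u in (0:ℝ)..t, f u)⁻¹) := by
  set F : ℝ → ℝ := fun s => ∫ u in (0:ℝ)..s, f u with hF
  have hFd : ∀ s, HasDerivAt F (f s) s := fun s => (hf.integral_hasStrictDerivAt 0 s).hasDerivAt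
  have hFc : Continuous F := continuous_iff_continuousAt.2 fun s => (hFd s).continuousAt
  have hne' : ∀ s ∈ Set.uIcc (0:ℝ) t, 1 + b * F s ≠ 0 := by
    intro s hs; exact hne s (by rwa [Set.uIcc_of_le ht] at hs)
  have hHd : ∀ s ∈ Set.uIcc (0:ℝ) t,
      HasDerivAt (fun s => (-1/b) * (1 + b * F s)⁻¹) (f s / (1 + b * F s)^2) s := by
    intro s hs
    have h1 : HasDerivAt (fun s => 1 + b * F s) (b * f s) s := ((hFd s).const_mul b).const_add 1
    have h2 := (h1.inv (hne' s hs)).const_mul (-1/b)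
    refine h2.congr_deriv ?_
    field_simp
  have hInt : IntervalIntegrable (fun s => f s / (1 + b * F s)^2) volume 0 t := by
    apply ContinuousOn.intervalIntegrable
    exact hf.continuousOn.div
      (((continuous_const.add (continuous_const.mul hFc)).pow 2).continuousOn)
      (fun s hs => pow_ne_zero 2 (hne' s hs))
  rw [intervalIntegral.integral_eq_sub_of_hasDerivAt hHd hInt]
  have hF0 : F 0 = 0 := intervalIntegral.integral_same
  rw [hF0]
  have hnt : 1 + b * F t ≠ 0 := hne' t Set.right_mem_uIcc
  change _ = 1/b * (1 - (1 + b * F t)⁻¹)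
  field_simp
  ring

/-- Inversion lemma, equivalence (1) ⇔ (2):
`x t = y t + log (1 + (1/n) ∫₀ᵗ e^{-β(y)}) • β∨` for all `t ≥ 0` holds iff
(`∫₀ᵗ e^{-β(x)} < n` for all `t > 0` and
`y t = x t + log (1 - (1/n) ∫₀ᵗ e^{-β(x)}) • β∨` for all `t ≥ 0`). -/
theorem inversion_lemma_iff
    {V : Type*} [NormedAddCommGroup V] [InnerProductSpace ℝ V] [FiniteDimensional ℝ V]
    (β : V →L[ℝ] ℝ) (hβ : β ≠ 0)
    (βvee : V) (hβvee : βvee = (2 / ‖β‖ ^ 2) • ((InnerProductSpace.toDual ℝ V).symm β))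
    (n : ℝ) (hn : 0 < n)
    (x y : ℝ → V) (hx : Continuous x) (hy : Continuous y) :
    (∀ t, 0 ≤ t →
      x t = y t + Real.log (1 + (1 / n) * ∫ s in (0:ℝ)..t, Real.exp (-β (y s))) • βvee)
    ↔
    ((∀ t, 0 < t → (∫ s in (0:ℝ)..t, Real.exp (-β (x s))) < n) ∧
      ∀ t, 0 ≤ t →
        y t = x t + Real.log (1 - (1 / n) * ∫ s in (0:ℝ)..t, Real.exp (-β (x s))) • βvee) := by
  have hβ2 : β βvee = 2 := by
    have hb : ‖β‖ ≠ 0 := norm_ne_zero_iff.mpr hβ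
    have h1 : β ((InnerProductSpace.toDual ℝ V).symm β) = ‖β‖ ^ 2 := by
      rw [← InnerProductSpace.toDual_symm_apply (𝕜 := ℝ)]
      rw [real_inner_self_eq_norm_sq, LinearIsometryEquiv.norm_map]
    rw [hβvee, _root_.map_smul, smul_eq_mul, h1]
    field_simp
  constructor
  · -- forward direction
    intro h
    set f : ℝ → ℝ := fun s => Real.exp (-β (y s)) with hf_def
    have hfc : Continuous f := Real.continuous_exp.comp (β.continuous.comp hy).neg
    set F : ℝ → ℝ := fun s => ∫ u in (0:ℝ)..s, f u with hFdef
    have hFnn : ∀ s, 0 ≤ s → 0 ≤ F s := fun s hs =>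
      intervalIntegral.integral_nonneg hs (fun u _ => (Real.exp_pos _).le)
    have hc : ∀ s, 0 ≤ s → 0 < 1 + (1/n) * F s := by
      intro s hs
      have := hFnn s hs
      positivity
    have hpt : ∀ s, 0 ≤ s → Real.exp (-β (x s)) = f s / (1 + (1/n) * F s)^2 := by
      intro s hs
      have hcpos := hc s hs
      have hβx : β (x s) = β (y s) + Real.log (1 + (1/n) * F s) * 2 := by
        rw [h s hs, map_add, _root_.map_smul, smul_eq_mul, hβ2]
      have e1 : Real.exp (-Real.log (1 + (1/n) * F s)) = (1 + (1/n) * F s)⁻¹ := by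
        rw [Real.exp_neg, Real.exp_log hcpos]
      rw [hβx, show -(β (y s) + Real.log (1 + (1/n) * F s) * 2)
          = -β (y s) + -Real.log (1 + (1/n) * F s) + -Real.log (1 + (1/n) * F s) by ring,
        Real.exp_add, Real.exp_add, e1]
      simp only [hf_def]
      rw [sq, div_eq_mul_inv (Real.exp (-β (y s))), mul_inv, mul_assoc]
    have hkey : ∀ t, 0 ≤ t → (∫ s in (0:ℝ)..t, Real.exp (-β (x s)))
        = n * (1 - (1 + (1/n) * F t)⁻¹) := by
      intro t ht
      have hcongr : (∫ s in (0:ℝ)..t, Real.exp (-β (x s)))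
          = ∫ s in (0:ℝ)..t, f s / (1 + (1/n) * F s)^2 := by
        apply intervalIntegral.integral_congr
        intro s hs
        exact hpt s (Set.uIcc_of_le ht ▸ hs).1
      rw [hcongr, aux_integral f hfc (1/n) (one_div_ne_zero hn.ne') t ht
        (fun s hs => (hc s hs.1).ne'), one_div_one_div]
    refine ⟨?_, ?_⟩
    · intro t ht
      rw [hkey t ht.le]
      have hcpos := hc t ht.le
      have h2 : 0 < (1 + (1/n) * F t)⁻¹ := inv_pos.mpr hcpos
      nlinarith
    · intro t ht
      have hcpos := hc t ht
      have harg : 1 - (1/n) * (∫ s in (0:ℝ)..t, Real.exp (-β (x s)))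
          = (1 + (1/n) * F t)⁻¹ := by
        rw [hkey t ht]
        field_simp
        ring
      rw [harg, Real.log_inv, h t ht]
      simp [neg_smul, hFdef]
  · -- backward direction
    rintro ⟨hlt, h⟩
    set f : ℝ → ℝ := fun s => Real.exp (-β (x s)) with hf_def
    have hfc : Continuous f := Real.continuous_exp.comp (β.continuous.comp hx).neg
    set G : ℝ → ℝ := fun s => ∫ u in (0:ℝ)..s, f u with hGdef
    have hGlt : ∀ s, 0 ≤ s → G s < n := by
      intro s hs
      rcases eq_or_lt_of_le hs with hs0 | hs0
      · simp [hGdef, ← hs0, intervalIntegral.integral_same, hn]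
      · exact hlt s hs0
    have hc : ∀ s, 0 ≤ s → 0 < 1 - (1/n) * G s := by
      intro s hs
      have h1 : (1/n) * G s < (1/n) * n := by
        apply mul_lt_mul_of_pos_left (hGlt s hs)
        positivity
      have h2 : (1/n) * n = 1 := by field_simp
      linarith
    have hpt : ∀ s, 0 ≤ s → Real.exp (-β (y s)) = f s / (1 - (1/n) * G s)^2 := by
      intro s hs
      have hcpos := hc s hs
      have hβy : β (y s) = β (x s) + Real.log (1 - (1/n) * G s) * 2 := by
        rw [h s hs, map_add, _root_.map_smul, smul_eq_mul, hβ2]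
      have e1 : Real.exp (-Real.log (1 - (1/n) * G s)) = (1 - (1/n) * G s)⁻¹ := by
        rw [Real.exp_neg, Real.exp_log hcpos]
      rw [hβy, show -(β (x s) + Real.log (1 - (1/n) * G s) * 2)
          = -β (x s) + -Real.log (1 - (1/n) * G s) + -Real.log (1 - (1/n) * G s) by ring,
        Real.exp_add, Real.exp_add, e1]
      simp only [hf_def]
      rw [sq, div_eq_mul_inv (Real.exp (-β (x s))), mul_inv, mul_assoc]
    have hkey : ∀ t, 0 ≤ t → (∫ s in (0:ℝ)..t, Real.exp (-β (y s)))
        = (-n) * (1 - (1 - (1/n) * G t)⁻¹) := by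
      intro t ht
      have hcongr : (∫ s in (0:ℝ)..t, Real.exp (-β (y s)))
          = ∫ s in (0:ℝ)..t, f s / (1 + (-(1/n)) * G s)^2 := by
        apply intervalIntegral.integral_congr
        intro s hs
        show Real.exp (-β (y s)) = f s / (1 + -(1/n) * G s)^2
        rw [hpt s (Set.uIcc_of_le ht ▸ hs).1]
        ring_nf
      have haux := aux_integral f hfc (-(1/n)) (neg_ne_zero.mpr (one_div_ne_zero hn.ne')) t ht
        (fun s hs => by
          have := hc s hs.1
          rw [show (1:ℝ) + -(1/n) * G s = 1 - (1/n) * G s by ring]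
          exact this.ne')
      rw [hcongr, haux]
      rw [show (1:ℝ) + -(1/n) * G t = 1 - (1/n) * G t by ring]
      rw [show (1:ℝ)/(-(1/n)) = -n by field_simp]
    intro t ht
    have hcpos := hc t ht
    have harg : 1 + (1/n) * (∫ s in (0:ℝ)..t, Real.exp (-β (y s)))
        = (1 - (1/n) * G t)⁻¹ := by
      rw [hkey t ht]
      field_simp
      ring
    rw [harg, Real.log_inv, h t ht]
    simp [neg_smul, hGdef]
end

section
/- With the setup of the inversion lemma, if x(t) = y(t) + log(1 + (1/n)∫₀ᵗ e^{-β(y(s))} ds)·β^∨ for all t and ∫₀^∞ e^{-β(y(s))} ds = ∞, then ∫₀^∞ e^{-β(x(s))} ds = n. -/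
open MeasureTheory Real Filter

/-- Inversion lemma, last claim: if
`x t = y t + log (1 + (1/n) ∫₀ᵗ e^{-β(y)}) • β∨` for all `t ≥ 0` and
`∫₀ᵗ e^{-β(y)} → ∞` as `t → ∞`, then `∫₀ᵗ e^{-β(x)} → n` as `t → ∞`. -/
theorem inversion_lemma_limit
    {V : Type*} [NormedAddCommGroup V] [InnerProductSpace ℝ V] [FiniteDimensional ℝ V]
    (β : V →L[ℝ] ℝ) (hβ : β ≠ 0)
    (βvee : V) (hβvee : βvee = (2 / ‖β‖ ^ 2) • ((InnerProductSpace.toDual ℝ V).symm β))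
    (n : ℝ) (hn : 0 < n)
    (x y : ℝ → V) (hx : Continuous x) (hy : Continuous y)
    (hxy : ∀ t, 0 ≤ t →
      x t = y t + Real.log (1 + (1 / n) * ∫ s in (0:ℝ)..t, Real.exp (-β (y s))) • βvee)
    (hdiv : Tendsto (fun t => ∫ s in (0:ℝ)..t, Real.exp (-β (y s))) atTop atTop) :
    Tendsto (fun t => ∫ s in (0:ℝ)..t, Real.exp (-β (x s))) atTop (nhds n) := by
  set F : ℝ → ℝ := fun t => ∫ s in (0:ℝ)..t, Real.exp (-β (y s)) with hF
  have hβv : β βvee = 2 := by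
    rw [hβvee, _root_.map_smul]
    have h1 : β ((InnerProductSpace.toDual ℝ V).symm β) = ‖β‖ ^ 2 := by
      have h := InnerProductSpace.toDual_symm_apply (𝕜 := ℝ) (E := V)
        (x := (InnerProductSpace.toDual ℝ V).symm β) (y := β)
      rw [← h, real_inner_self_eq_norm_sq,
        (InnerProductSpace.toDual ℝ V).symm.norm_map]
    rw [h1]
    have hβn : ‖β‖ ≠ 0 := norm_ne_zero_iff.mpr hβ
    rw [smul_eq_mul]
    field_simp
  have hcy : Continuous fun s => Real.exp (-β (y s)) :=
    (Real.continuous_exp.comp (β.continuous.comp hy).neg)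
  have hcx : Continuous fun s => Real.exp (-β (x s)) :=
    (Real.continuous_exp.comp (β.continuous.comp hx).neg)
  have hFderiv : ∀ s : ℝ, HasDerivAt F (Real.exp (-β (y s))) s := fun s =>
    intervalIntegral.integral_hasDerivAt_right (hcy.intervalIntegrable _ _)
      (hcy.stronglyMeasurableAtFilter _ _) hcy.continuousAt
  have hFpos : ∀ s : ℝ, 0 ≤ s → 0 ≤ F s := fun s hs =>
    intervalIntegral.integral_nonneg hs (fun u _ => (Real.exp_pos _).le)
  have hc : ∀ s : ℝ, 0 ≤ s → 0 < 1 + (1 / n) * F s := by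
    intro s hs
    have : 0 ≤ (1 / n) * F s := mul_nonneg (by positivity) (hFpos s hs)
    linarith
  -- key pointwise identity
  have hkey : ∀ s : ℝ, 0 ≤ s →
      Real.exp (-β (x s)) = Real.exp (-β (y s)) / (1 + (1 / n) * F s) ^ 2 := by
    intro s hs
    have hxs := hxy s hs
    rw [hxs]
    have hcs := hc s hs
    rw [map_add, _root_.map_smul, smul_eq_mul, hβv]
    rw [neg_add, Real.exp_add]
    have : Real.exp (-(Real.log (1 + 1 / n * F s) * 2)) =
        ((1 + 1 / n * F s) ^ 2)⁻¹ := by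
      rw [show Real.log (1 + 1 / n * F s) * 2
            = Real.log (1 + 1 / n * F s) + Real.log (1 + 1 / n * F s) by ring,
        Real.exp_neg, Real.exp_add, Real.exp_log hcs, sq]
    rw [this]
    ring
  -- integral identity
  have hint : ∀ t : ℝ, 0 ≤ t →
      (∫ s in (0:ℝ)..t, Real.exp (-β (x s))) = n - n / (1 + (1 / n) * F t) := by
    intro t ht
    have hG : ∀ s ∈ Set.uIcc (0:ℝ) t,
        HasDerivAt (fun u => n - n / (1 + (1 / n) * F u)) (Real.exp (-β (x s))) s := by
      intro s hs
      have hs0 : 0 ≤ s := by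
        rcases Set.mem_uIcc.mp hs with h | h
        · exact h.1
        · linarith [h.1, ht]
      have hcs := hc s hs0
      have h1 : HasDerivAt (fun u => 1 + (1 / n) * F u)
          ((1 / n) * Real.exp (-β (y s))) s :=
        ((hFderiv s).const_mul (1 / n)).const_add 1
      have h2 : HasDerivAt (fun u => n / (1 + (1 / n) * F u))
          ((0 * (1 + (1 / n) * F s) - n * ((1 / n) * Real.exp (-β (y s)))) /
            (1 + (1 / n) * F s) ^ 2) s :=
        (hasDerivAt_const s n).div h1 hcs.ne'
      have h3 := h2.const_sub n
      refine h3.congr_deriv (Eq.symm ?_)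
      rw [hkey s hs0]
      field_simp
      ring
    rw [intervalIntegral.integral_eq_sub_of_hasDerivAt hG (hcx.intervalIntegrable _ _)]
    simp [F]
  -- limit
  have hlim : Tendsto (fun t => n - n / (1 + (1 / n) * F t)) atTop (nhds n) := by
    have h1 : Tendsto (fun t => 1 + (1 / n) * F t) atTop atTop :=
      tendsto_atTop_add_const_left _ 1 (hdiv.const_mul_atTop (by positivity))
    have h2 : Tendsto (fun t => n / (1 + (1 / n) * F t)) atTop (nhds 0) := by
      simpa [div_eq_mul_inv] using h1.inv_tendsto_atTop.const_mul n
    simpa using (tendsto_const_nhds (x := n) (f := atTop)).sub h2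
  exact Tendsto.congr' (Filter.eventually_atTop.mpr ⟨0, fun t ht => (hint t ht).symm⟩) hlim
end

section
/- As h → 0⁺, -h·log(γ_{hμ}) converges in distribution to an exponential random variable with parameter μ, where γ_{hμ} denotes a Gamma random variable with shape hμ and rate 1. Equivalently, for every x > 0, P(-h log γ_{hμ} ≤ x) = P(γ_{hμ} ≥ e^{-x/h}) → 1 - e^{-μx} as h → 0⁺. -/
open MeasureTheory ProbabilityTheory Real Filter Set

lemma int_rpow_Ioo {a c : ℝ} (ha : 0 < a) (hc : 0 < c) :
    ∫ t in Ioo (0:ℝ) c, t ^ (a - 1) = c ^ a / a := by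
  rw [← MeasureTheory.integral_Ioc_eq_integral_Ioo, ← intervalIntegral.integral_of_le hc.le,
    integral_rpow (Or.inl (by linarith))]
  rw [sub_add_cancel, Real.zero_rpow ha.ne']
  ring

lemma integrable_rpow_Ioo {a c : ℝ} (ha : 0 < a) (hc : 0 < c) :
    IntegrableOn (fun t : ℝ => t ^ (a - 1)) (Ioo 0 c) := by
  have := (intervalIntegral.intervalIntegrable_rpow' (r := a - 1) (by linarith)
    (a := 0) (b := c))
  rw [intervalIntegrable_iff_integrableOn_Ioc_of_le hc.le] at this
  exact this.mono_set Ioo_subset_Ioc_self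

lemma gammaMeasure_Iio_eq {a c : ℝ} (hc : 0 < c) :
    (gammaMeasure a 1) (Iio c) = ∫⁻ t in Ioo 0 c, gammaPDF a 1 t := by
  rw [gammaMeasure, withDensity_apply _ measurableSet_Iio]
  have hsplit : Iio c = Iio 0 ∪ Ico 0 c := by
    rw [Iio_union_Ico_eq_Iio hc.le]
  rw [hsplit, lintegral_union measurableSet_Ico (by
    simp_rw [Set.disjoint_iff_forall_ne, mem_Iio, mem_Ico]
    intro t ht s hs; intro h; subst h; linarith [hs.1])]
  have h1 : ∫⁻ t in Iio (0:ℝ), gammaPDF a 1 t = 0 := by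
    rw [setLIntegral_congr_fun_ae (g := fun _ => 0) measurableSet_Iio
      (ae_of_all _ fun t (ht : t < 0) => gammaPDF_of_neg ht), lintegral_zero]
  rw [h1, zero_add]
  exact (setLIntegral_congr Ioo_ae_eq_Ico).symm

lemma gammaMeasure_Iio_bounds {a c : ℝ} (ha : 0 < a) (hc : 0 < c) :
    exp (-c) * (c ^ a / (a * Gamma a)) ≤ ((gammaMeasure a 1) (Iio c)).toReal ∧
      ((gammaMeasure a 1) (Iio c)).toReal ≤ c ^ a / (a * Gamma a) := by
  have hG : 0 < Gamma a := Gamma_pos_of_pos ha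
  have hupper : (gammaMeasure a 1) (Iio c) ≤ ENNReal.ofReal (c ^ a / (a * Gamma a)) := by
    rw [gammaMeasure_Iio_eq hc]
    calc ∫⁻ t in Ioo 0 c, gammaPDF a 1 t
        ≤ ∫⁻ t in Ioo 0 c, ENNReal.ofReal (t ^ (a - 1) / Gamma a) := by
          refine setLIntegral_mono (by fun_prop) fun t ht => ?_
          rw [gammaPDF_of_nonneg ht.1.le]
          refine ENNReal.ofReal_le_ofReal ?_
          rw [one_rpow, one_mul]
          have h1 : exp (-t) ≤ 1 := exp_le_one_iff.mpr (by linarith [ht.1])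
          have h2 : (0:ℝ) ≤ t ^ (a - 1) := rpow_nonneg ht.1.le _
          have h3 : (0:ℝ) < 1 / Gamma a := by positivity
          calc 1 / Gamma a * t ^ (a - 1) * exp (-t) ≤ 1 / Gamma a * t ^ (a - 1) * 1 := by
                exact mul_le_mul_of_nonneg_left h1 (by positivity)
            _ = t ^ (a - 1) / Gamma a := by ring
      _ = ENNReal.ofReal (∫ t in Ioo 0 c, t ^ (a - 1) / Gamma a) :=
          (ofReal_integral_eq_lintegral_ofReal ((integrable_rpow_Ioo ha hc).div_const _)
            ((ae_restrict_iff' measurableSet_Ioo).mpr (ae_of_all _ fun t ht =>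
              div_nonneg (rpow_nonneg ht.1.le _) hG.le))).symm
      _ = ENNReal.ofReal (c ^ a / (a * Gamma a)) := by
          rw [integral_div, int_rpow_Ioo ha hc, div_div]
  have hfin : (gammaMeasure a 1) (Iio c) ≠ ⊤ :=
    (lt_of_le_of_lt hupper ENNReal.ofReal_lt_top).ne
  have hlower : ENNReal.ofReal (exp (-c) * (c ^ a / (a * Gamma a)))
      ≤ (gammaMeasure a 1) (Iio c) := by
    rw [gammaMeasure_Iio_eq hc]
    calc ENNReal.ofReal (exp (-c) * (c ^ a / (a * Gamma a)))
        = ENNReal.ofReal (∫ t in Ioo 0 c, exp (-c) * (t ^ (a - 1) / Gamma a)) := by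
          rw [integral_const_mul, integral_div, int_rpow_Ioo ha hc, div_div]
      _ = ∫⁻ t in Ioo 0 c, ENNReal.ofReal (exp (-c) * (t ^ (a - 1) / Gamma a)) :=
          ofReal_integral_eq_lintegral_ofReal
            (((integrable_rpow_Ioo ha hc).div_const _).const_mul _)
            ((ae_restrict_iff' measurableSet_Ioo).mpr (ae_of_all _ fun t ht => by
              have := rpow_nonneg ht.1.le (a - 1); positivity))
      _ ≤ ∫⁻ t in Ioo 0 c, gammaPDF a 1 t := by
          refine setLIntegral_mono ((measurable_gammaPDFReal a 1).ennreal_ofReal) fun t ht => ?_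
          rw [gammaPDF_of_nonneg ht.1.le]
          refine ENNReal.ofReal_le_ofReal ?_
          rw [one_rpow, one_mul]
          have h1 : exp (-c) ≤ exp (-t) := exp_le_exp.mpr (by linarith [ht.2])
          have h2 : (0:ℝ) ≤ t ^ (a - 1) := rpow_nonneg ht.1.le _
          calc exp (-c) * (t ^ (a - 1) / Gamma a) = 1 / Gamma a * t ^ (a - 1) * exp (-c) := by ring
            _ ≤ 1 / Gamma a * t ^ (a - 1) * exp (-t) :=
                mul_le_mul_of_nonneg_left h1 (by positivity)
  constructor
  · have := ENNReal.toReal_mono hfin hlower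
    rwa [ENNReal.toReal_ofReal (by positivity)] at this
  · exact ENNReal.toReal_le_of_le_ofReal (by positivity) hupper

/-- As `h → 0⁺`, `-h log γ_{hμ}` converges in distribution to an exponential variable of
parameter `μ`: for every `x > 0`, `P(γ_{hμ} ≥ e^{-x/h}) → 1 - e^{-μ x}`. -/
theorem neg_h_log_gamma_tendsto_exponential (μ : ℝ) (hμ : 0 < μ) :
    ∀ x : ℝ, 0 < x →
      Tendsto (fun h : ℝ =>
          ((gammaMeasure (h * μ) 1) (Set.Ici (Real.exp (-x / h)))).toReal)
        (nhdsWithin 0 (Set.Ioi 0)) (nhds (1 - Real.exp (-μ * x))) := by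
  intro x hx
  set G : ℝ → ℝ := fun h => ((gammaMeasure (h * μ) 1) (Iio (Real.exp (-x / h)))).toReal with hGdef
  -- key algebraic facts for h > 0
  have hkey : ∀ h : ℝ, 0 < h →
      Real.exp (-x / h) ^ (h * μ) / (h * μ * Gamma (h * μ)) =
        Real.exp (-μ * x) / Gamma (h * μ + 1) := by
    intro h hh
    have ha : 0 < h * μ := mul_pos hh hμ
    rw [Real.Gamma_add_one ha.ne', Real.rpow_def_of_pos (exp_pos _), Real.log_exp]
    congr 2
    field_simp
  -- G tends to exp (-μ x) by squeeze
  have hGlim : Tendsto G (nhdsWithin 0 (Set.Ioi 0)) (nhds (Real.exp (-μ * x))) := by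
    have T1 : Tendsto (fun h : ℝ => Real.exp (-x / h)) (nhdsWithin 0 (Set.Ioi 0)) (nhds 0) := by
      apply Real.tendsto_exp_atBot.comp
      have : Tendsto (fun h : ℝ => x * h⁻¹) (nhdsWithin 0 (Set.Ioi 0)) atTop :=
        (tendsto_inv_nhdsGT_zero).const_mul_atTop hx
      have h2 : Tendsto (fun h : ℝ => -(x * h⁻¹)) (nhdsWithin 0 (Set.Ioi 0)) atBot :=
        tendsto_neg_atTop_atBot.comp this
      refine h2.congr fun h => by rw [neg_div, div_eq_mul_inv]
    have T2 : Tendsto (fun h : ℝ => Gamma (h * μ + 1)) (nhdsWithin 0 (Set.Ioi 0)) (nhds 1) := by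
      have hcont : ContinuousAt Gamma 1 :=
        (Real.differentiableAt_Gamma (s := 1) (fun m hEq => by
          have h0 : (0:ℝ) ≤ (m:ℝ) := Nat.cast_nonneg m
          linarith)).continuousAt
      have harg : Tendsto (fun h : ℝ => h * μ + 1) (nhdsWithin 0 (Set.Ioi 0)) (nhds 1) := by
        have : Tendsto (fun h : ℝ => h * μ + 1) (nhds 0) (nhds (0 * μ + 1)) :=
          ((continuous_id.mul continuous_const).add continuous_const).tendsto 0
        simpa using this.mono_left nhdsWithin_le_nhds
      have := hcont.tendsto.comp harg
      rwa [Real.Gamma_one] at this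
    have Tlow : Tendsto (fun h : ℝ =>
        Real.exp (-Real.exp (-x / h)) * (Real.exp (-μ * x) / Gamma (h * μ + 1)))
        (nhdsWithin 0 (Set.Ioi 0)) (nhds (Real.exp (-μ * x))) := by
      have h1 : Tendsto (fun h : ℝ => Real.exp (-Real.exp (-x / h)))
          (nhdsWithin 0 (Set.Ioi 0)) (nhds 1) := by
        have := (Real.continuous_exp.tendsto 0).comp
          (show Tendsto (fun h : ℝ => -Real.exp (-x / h)) (nhdsWithin 0 (Set.Ioi 0)) (nhds 0)
            by simpa using T1.neg)
        simpa [Function.comp_def] using this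
      have h2 : Tendsto (fun h : ℝ => Real.exp (-μ * x) / Gamma (h * μ + 1))
          (nhdsWithin 0 (Set.Ioi 0)) (nhds (Real.exp (-μ * x))) := by
        simpa [Pi.div_def] using (tendsto_const_nhds (x := Real.exp (-μ * x))).div T2 one_ne_zero
      simpa using h1.mul h2
    have Thigh : Tendsto (fun h : ℝ => Real.exp (-μ * x) / Gamma (h * μ + 1))
        (nhdsWithin 0 (Set.Ioi 0)) (nhds (Real.exp (-μ * x))) := by
      simpa [Pi.div_def] using (tendsto_const_nhds (x := Real.exp (-μ * x))).div T2 one_ne_zero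
    refine tendsto_of_tendsto_of_tendsto_of_le_of_le' Tlow Thigh ?_ ?_
    · filter_upwards [self_mem_nhdsWithin] with h hh
      have hh : (0:ℝ) < h := hh
      have hb := (gammaMeasure_Iio_bounds (mul_pos hh hμ) (exp_pos (-x / h))).1
      rwa [hkey h hh] at hb
    · filter_upwards [self_mem_nhdsWithin] with h hh
      have hh : (0:ℝ) < h := hh
      have hb := (gammaMeasure_Iio_bounds (mul_pos hh hμ) (exp_pos (-x / h))).2
      rwa [hkey h hh] at hb
  -- rewrite Ici as complement of Iio
  have heq : ∀ᶠ h in nhdsWithin (0:ℝ) (Set.Ioi 0),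
      ((gammaMeasure (h * μ) 1) (Set.Ici (Real.exp (-x / h)))).toReal = 1 - G h := by
    filter_upwards [self_mem_nhdsWithin] with h hh
    have hh : (0:ℝ) < h := hh
    haveI := isProbabilityMeasure_gammaMeasure (mul_pos hh hμ) one_pos
    rw [← Set.compl_Iio, measure_compl measurableSet_Iio (measure_ne_top _ _), measure_univ,
      ENNReal.toReal_sub_of_le prob_le_one ENNReal.one_ne_top, ENNReal.toReal_one]
  exact Tendsto.congr' (heq.mono fun h e => e.symm)
    (by simpa using (tendsto_const_nhds (x := (1:ℝ))).sub hGlim)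
end

section
/- (A₂ beta–gamma identity, forward direction) Let a₁, a₂ > 0 and let t₁, t₂, t₃ be independent random variables with t₁ ~ Gamma(a₁), t₂ ~ Gamma(a₁+a₂), t₃ ~ Gamma(a₂) (rate 1). Define p₁ = t₂t₃/(t₁+t₃), p₂ = t₁+t₃, p₃ = t₁t₂/(t₁+t₃). Then (p₁, p₂, p₃) has the same joint law as three independent random variables distributed Gamma(a₂), Gamma(a₁+a₂), Gamma(a₁) respectively. -/
open MeasureTheory ProbabilityTheory Set ContinuousLinearMap
open scoped ENNReal

noncomputable section A2Aux

namespace A2Aux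

/-! ### The A₂ involution and its basic properties -/

/-- The A₂ transformation. -/
def T (p : ℝ × ℝ × ℝ) : ℝ × ℝ × ℝ :=
  (p.2.1 * p.2.2 / (p.1 + p.2.2), p.1 + p.2.2, p.1 * p.2.1 / (p.1 + p.2.2))

/-- The positive octant. -/
def S : Set (ℝ × ℝ × ℝ) := {p | 0 < p.1 ∧ 0 < p.2.1 ∧ 0 < p.2.2}

lemma measurable_T : Measurable T := by
  unfold T; fun_prop

lemma isOpen_S : IsOpen S := by
  have : S = (fun p : ℝ × ℝ × ℝ => p.1) ⁻¹' Ioi 0 ∩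
      ((fun p : ℝ × ℝ × ℝ => p.2.1) ⁻¹' Ioi 0 ∩ (fun p : ℝ × ℝ × ℝ => p.2.2) ⁻¹' Ioi 0) := rfl
  rw [this]
  exact (isOpen_Ioi.preimage continuous_fst).inter
    ((isOpen_Ioi.preimage (continuous_fst.comp continuous_snd)).inter
      (isOpen_Ioi.preimage (continuous_snd.comp continuous_snd)))

lemma measurableSet_S : MeasurableSet S := isOpen_S.measurableSet

lemma T_mem_S {p : ℝ × ℝ × ℝ} (hp : p ∈ S) : T p ∈ S := by
  obtain ⟨hx, hy, hz⟩ := hp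
  refine ⟨?_, ?_, ?_⟩ <;> · simp only [T]; positivity

lemma T_T {p : ℝ × ℝ × ℝ} (hp : p ∈ S) : T (T p) = p := by
  obtain ⟨hx, hy, hz⟩ := hp
  obtain ⟨x, y, z⟩ := p
  simp only at hx hy hz
  have hs : x + z ≠ 0 := by positivity
  have h2 : y * z / (x + z) + x * y / (x + z) ≠ 0 := by
    rw [← add_div]; positivity
  simp only [T, Prod.mk.injEq]
  refine ⟨?_, ?_, ?_⟩ <;> field_simp <;> ring

lemma injOn_T : Set.InjOn T S := fun p hp q hq h => by
  rw [← T_T hp, ← T_T hq, h]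

lemma image_T : T '' S = S := by
  apply Subset.antisymm
  · rintro _ ⟨p, hp, rfl⟩; exact T_mem_S hp
  · intro p hp
    exact ⟨T p, T_mem_S hp, T_T hp⟩

/-! ### Derivative and Jacobian determinant of `T` -/

def CX : ℝ × ℝ × ℝ →L[ℝ] ℝ := fst ℝ ℝ (ℝ × ℝ)
def CY : ℝ × ℝ × ℝ →L[ℝ] ℝ := (fst ℝ ℝ ℝ).comp (snd ℝ ℝ (ℝ × ℝ))
def CZ : ℝ × ℝ × ℝ →L[ℝ] ℝ := (snd ℝ ℝ ℝ).comp (snd ℝ ℝ (ℝ × ℝ))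

def Tderiv (p : ℝ × ℝ × ℝ) : ℝ × ℝ × ℝ →L[ℝ] ℝ × ℝ × ℝ :=
  ((p.2.1 * p.2.2) • ((-(((p.1 + p.2.2) ^ 2)⁻¹)) • (CX + CZ)) +
      (p.1 + p.2.2)⁻¹ • (p.2.1 • CZ + p.2.2 • CY)).prod
    ((CX + CZ).prod
      ((p.1 * p.2.1) • ((-(((p.1 + p.2.2) ^ 2)⁻¹)) • (CX + CZ)) +
        (p.1 + p.2.2)⁻¹ • (p.1 • CY + p.2.1 • CX)))

lemma hasFDerivAt_T {p : ℝ × ℝ × ℝ} (hp : p.1 + p.2.2 ≠ 0) :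
    HasFDerivAt T (Tderiv p) p := by
  have hX : HasFDerivAt (fun q : ℝ × ℝ × ℝ => q.1) CX p := hasFDerivAt_fst
  have hY : HasFDerivAt (fun q : ℝ × ℝ × ℝ => q.2.1) CY p :=
    HasFDerivAt.comp p hasFDerivAt_fst hasFDerivAt_snd
  have hZ : HasFDerivAt (fun q : ℝ × ℝ × ℝ => q.2.2) CZ p :=
    HasFDerivAt.comp p hasFDerivAt_snd hasFDerivAt_snd
  have hd : HasFDerivAt (fun q : ℝ × ℝ × ℝ => q.1 + q.2.2) (CX + CZ) p := hX.add hZ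
  have hinv : HasFDerivAt (fun q : ℝ × ℝ × ℝ => (q.1 + q.2.2)⁻¹)
      ((-((p.1 + p.2.2) ^ 2)⁻¹) • (CX + CZ)) p :=
    (hasDerivAt_inv hp).comp_hasFDerivAt p hd
  have h1 : HasFDerivAt (fun q : ℝ × ℝ × ℝ => q.2.1 * q.2.2 * (q.1 + q.2.2)⁻¹)
      ((p.2.1 * p.2.2) • ((-(((p.1 + p.2.2) ^ 2)⁻¹)) • (CX + CZ)) +
        (p.1 + p.2.2)⁻¹ • (p.2.1 • CZ + p.2.2 • CY)) p := (hY.mul hZ).mul hinv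
  have h3 : HasFDerivAt (fun q : ℝ × ℝ × ℝ => q.1 * q.2.1 * (q.1 + q.2.2)⁻¹)
      ((p.1 * p.2.1) • ((-(((p.1 + p.2.2) ^ 2)⁻¹)) • (CX + CZ)) +
        (p.1 + p.2.2)⁻¹ • (p.1 • CY + p.2.1 • CX)) p := (hX.mul hY).mul hinv
  have := h1.prodMk (hd.prodMk h3)
  exact this

/-- linear equivalence with `Fin 3 → ℝ`. -/
def e3 : (ℝ × ℝ × ℝ) ≃ₗ[ℝ] (Fin 3 → ℝ) where
  toFun p := ![p.1, p.2.1, p.2.2]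
  invFun v := (v 0, v 1, v 2)
  map_add' p q := by
    funext i; fin_cases i <;> simp
  map_smul' c p := by
    funext i; fin_cases i <;> simp
  left_inv p := by simp
  right_inv v := by
    funext i; fin_cases i <;> simp

def b3 : Module.Basis (Fin 3) ℝ (ℝ × ℝ × ℝ) := Module.Basis.ofEquivFun e3

lemma det_Tderiv {p : ℝ × ℝ × ℝ} (hx : 0 < p.1) (hy : 0 < p.2.1) (hz : 0 < p.2.2) :
    |(Tderiv p).det| = p.2.1 / (p.1 + p.2.2) := by
  obtain ⟨x, y, z⟩ := p
  simp only at hx hy hz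
  have hs : (0:ℝ) < x + z := by positivity
  have hdet : (Tderiv (x, y, z)).det = y / (x + z) := by
    rw [ContinuousLinearMap.det, ← LinearMap.det_toMatrix b3, Matrix.det_fin_three]
    have hb : ∀ i : Fin 3, ∀ q, (b3.repr q) i = e3 q i := fun i q => rfl
    have hb0 : b3 0 = (1, 0, 0) := by
      simp [b3, Module.Basis.coe_ofEquivFun, e3]
    have hb1 : b3 1 = (0, 1, 0) := by
      simp [b3, Module.Basis.coe_ofEquivFun, e3]
    have hb2 : b3 2 = (0, 0, 1) := by
      simp [b3, Module.Basis.coe_ofEquivFun, e3]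
    simp only [LinearMap.toMatrix_apply, ContinuousLinearMap.coe_coe, hb0, hb1, hb2, hb]
    simp only [Tderiv, CX, CY, CZ, ContinuousLinearMap.prod_apply, ContinuousLinearMap.add_apply,
      ContinuousLinearMap.coe_smul', Pi.smul_apply, ContinuousLinearMap.coe_comp',
      Function.comp_apply, ContinuousLinearMap.coe_fst', ContinuousLinearMap.coe_snd',
      smul_eq_mul, e3]
    simp only [LinearEquiv.coe_mk, LinearMap.coe_mk, AddHom.coe_mk, Matrix.cons_val_zero, Matrix.cons_val_one, Matrix.head_cons,
      Matrix.cons_val_two, Matrix.tail_cons]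
    field_simp
    ring
  rw [hdet, abs_of_pos (by positivity)]

/-! ### Product densities -/

lemma withDensity_prod {α β : Type*} [MeasurableSpace α] [MeasurableSpace β]
    (μ : Measure α) (ν : Measure β) [SigmaFinite μ] [SigmaFinite ν]
    (f : α → ℝ≥0∞) (g : β → ℝ≥0∞) (hf : Measurable f) (hg : Measurable g)
    [SigmaFinite (μ.withDensity f)] [SigmaFinite (ν.withDensity g)] :
    (μ.withDensity f).prod (ν.withDensity g) =
      (μ.prod ν).withDensity fun z => f z.1 * g z.2 := by
  refine Measure.prod_eq fun s t hs ht => ?_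
  rw [withDensity_apply _ (hs.prod ht), ← Measure.prod_restrict,
    lintegral_prod_mul hf.aemeasurable hg.aemeasurable,
    withDensity_apply _ hs, withDensity_apply _ ht]

/-- The density of the triple product of gamma measures with shapes `a`, `a + b`, `c`. -/
def Gd (a b c : ℝ) (p : ℝ × ℝ × ℝ) : ℝ≥0∞ :=
  gammaPDF a 1 p.1 * (gammaPDF b 1 p.2.1 * gammaPDF c 1 p.2.2)

lemma measurable_Gd (a b c : ℝ) : Measurable (Gd a b c) :=
  (((measurable_gammaPDFReal a 1).comp measurable_fst).ennreal_ofReal).mul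
    ((((measurable_gammaPDFReal b 1).comp
        (measurable_fst.comp measurable_snd)).ennreal_ofReal).mul
      (((measurable_gammaPDFReal c 1).comp
        (measurable_snd.comp measurable_snd)).ennreal_ofReal))

lemma gamma_prod_eq (a b c : ℝ) (ha : 0 < a) (hb : 0 < b) (hc : 0 < c) :
    (gammaMeasure a 1).prod ((gammaMeasure b 1).prod (gammaMeasure c 1)) =
      (volume : Measure (ℝ × ℝ × ℝ)).withDensity (Gd a b c) := by
  haveI : SigmaFinite ((volume : Measure ℝ).withDensity (gammaPDF c 1)) := by
    haveI := isProbabilityMeasure_gammaMeasure hc one_pos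
    exact (inferInstance : SigmaFinite (gammaMeasure c 1))
  haveI : SigmaFinite ((volume : Measure ℝ).withDensity (gammaPDF b 1)) := by
    haveI := isProbabilityMeasure_gammaMeasure hb one_pos
    exact (inferInstance : SigmaFinite (gammaMeasure b 1))
  haveI : SigmaFinite ((volume : Measure ℝ).withDensity (gammaPDF a 1)) := by
    haveI := isProbabilityMeasure_gammaMeasure ha one_pos
    exact (inferInstance : SigmaFinite (gammaMeasure a 1))
  have hinner : (gammaMeasure b 1).prod (gammaMeasure c 1) =
      (volume : Measure (ℝ × ℝ)).withDensity
        fun q => gammaPDF b 1 q.1 * gammaPDF c 1 q.2 := by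
    rw [Measure.volume_eq_prod]
    exact withDensity_prod volume volume _ _
      (measurable_gammaPDFReal _ _).ennreal_ofReal (measurable_gammaPDFReal _ _).ennreal_ofReal
  rw [hinner]
  haveI : SigmaFinite ((gammaMeasure b 1).prod (gammaMeasure c 1)) := by
    haveI := isProbabilityMeasure_gammaMeasure hb one_pos
    haveI := isProbabilityMeasure_gammaMeasure hc one_pos
    infer_instance
  haveI : SigmaFinite ((volume : Measure (ℝ × ℝ)).withDensity
      fun q => gammaPDF b 1 q.1 * gammaPDF c 1 q.2) := by
    rw [← hinner]; infer_instance
  rw [Measure.volume_eq_prod (α := ℝ) (β := ℝ × ℝ)]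
  exact withDensity_prod volume volume _ _
    (measurable_gammaPDFReal _ _).ennreal_ofReal
    (((measurable_gammaPDFReal _ _).comp measurable_fst).ennreal_ofReal.mul
      ((measurable_gammaPDFReal _ _).comp measurable_snd).ennreal_ofReal)

/-! ### Null boundary -/

lemma null_boundary :
    (volume : Measure (ℝ × ℝ × ℝ))
      {p | p.1 = 0 ∨ p.2.1 = 0 ∨ p.2.2 = 0} = 0 := by
  have hset : {p : ℝ × ℝ × ℝ | p.1 = 0 ∨ p.2.1 = 0 ∨ p.2.2 = 0} =
      (({0} : Set ℝ) ×ˢ (univ : Set (ℝ × ℝ))) ∪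
        (((univ : Set ℝ) ×ˢ (({0} : Set ℝ) ×ˢ (univ : Set ℝ))) ∪
          ((univ : Set ℝ) ×ˢ ((univ : Set ℝ) ×ˢ ({0} : Set ℝ)))) := by
    ext ⟨x, y, z⟩
    simp only [Set.mem_setOf_eq, Set.mem_union, Set.mem_prod, Set.mem_singleton_iff,
      Set.mem_univ, and_true, true_and]
  rw [hset]
  refine measure_union_null ?_ (measure_union_null ?_ ?_)
  · rw [Measure.volume_eq_prod, Measure.prod_prod]
    simp
  · rw [Measure.volume_eq_prod, Measure.prod_prod,
      Measure.volume_eq_prod, Measure.prod_prod]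
    simp
  · rw [Measure.volume_eq_prod, Measure.prod_prod,
      Measure.volume_eq_prod, Measure.prod_prod]
    simp

lemma Gd_ae_indicator (a b c : ℝ) :
    (Gd a b c) =ᵐ[(volume : Measure (ℝ × ℝ × ℝ))] S.indicator (Gd a b c) := by
  rw [Filter.EventuallyEq, ae_iff]
  refine measure_mono_null ?_ null_boundary
  intro p hp
  simp only [mem_setOf_eq] at hp ⊢
  by_contra hN
  push_neg at hN
  obtain ⟨hN1, hN2, hN3⟩ := hN
  have hpS : p ∉ S := by
    intro hpS
    exact hp (by rw [Set.indicator_of_mem hpS])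
  have hG : Gd a b c p ≠ 0 := by
    intro h0
    exact hp (by rw [Set.indicator_of_notMem hpS, h0])
  have h1 : gammaPDF a 1 p.1 ≠ 0 ∧ gammaPDF b 1 p.2.1 ≠ 0 ∧ gammaPDF c 1 p.2.2 ≠ 0 := by
    unfold Gd at hG
    refine ⟨fun h => hG ?_, fun h => hG ?_, fun h => hG ?_⟩ <;> simp [h]
  have hx : 0 ≤ p.1 := by
    by_contra h
    exact h1.1 (gammaPDF_of_neg (lt_of_not_ge h))
  have hy : 0 ≤ p.2.1 := by
    by_contra h
    exact h1.2.1 (gammaPDF_of_neg (lt_of_not_ge h))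
  have hz : 0 ≤ p.2.2 := by
    by_contra h
    exact h1.2.2 (gammaPDF_of_neg (lt_of_not_ge h))
  apply hpS
  exact ⟨lt_of_le_of_ne hx (Ne.symm hN1), lt_of_le_of_ne hy (Ne.symm hN2),
    lt_of_le_of_ne hz (Ne.symm hN3)⟩

lemma setLIntegral_Gd_inter_S (a b c : ℝ) (t : Set (ℝ × ℝ × ℝ)) :
    ∫⁻ p in t, Gd a b c p = ∫⁻ p in t ∩ S, Gd a b c p := by
  rw [lintegral_congr_ae (ae_restrict_of_ae (Gd_ae_indicator a b c)),
    lintegral_indicator measurableSet_S, Measure.restrict_restrict measurableSet_S,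
    Set.inter_comm]

/-! ### Pointwise density identity -/

lemma density_identity {a₁ a₂ : ℝ} (ha₁ : 0 < a₁) (ha₂ : 0 < a₂)
    {p : ℝ × ℝ × ℝ} (hp : p ∈ S) :
    ENNReal.ofReal |(Tderiv p).det| * Gd a₂ (a₁ + a₂) a₁ (T p) = Gd a₁ (a₁ + a₂) a₂ p := by
  obtain ⟨hx, hy, hz⟩ := hp
  obtain ⟨x, y, z⟩ := p
  simp only at hx hy hz
  have hs : (0:ℝ) < x + z := by positivity
  have hA : (0:ℝ) < a₁ + a₂ := by positivity
  rw [det_Tderiv hx hy hz]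
  simp only [T, Gd]
  have harg1 : (0:ℝ) ≤ y * z / (x + z) := by positivity
  have harg3 : (0:ℝ) ≤ x * y / (x + z) := by positivity
  rw [gammaPDF_of_nonneg harg1, gammaPDF_of_nonneg hs.le, gammaPDF_of_nonneg harg3,
    gammaPDF_of_nonneg hx.le, gammaPDF_of_nonneg hy.le, gammaPDF_of_nonneg hz.le]
  simp only [Real.one_rpow, one_mul, one_div]
  rw [← ENNReal.ofReal_mul (by positivity), ← ENNReal.ofReal_mul (by positivity),
    ← ENNReal.ofReal_mul (by positivity), ← ENNReal.ofReal_mul (by positivity),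
    ← ENNReal.ofReal_mul (by positivity)]
  congr 1
  have hG1 : (0:ℝ) < Real.Gamma a₁ := Real.Gamma_pos_of_pos ha₁
  have hG2 : (0:ℝ) < Real.Gamma (a₁ + a₂) := Real.Gamma_pos_of_pos hA
  have hG3 : (0:ℝ) < Real.Gamma a₂ := Real.Gamma_pos_of_pos ha₂
  have e1 : (y * z / (x + z)) ^ (a₂ - 1) =
      y ^ (a₂ - 1) * z ^ (a₂ - 1) / (x + z) ^ (a₂ - 1) := by
    rw [Real.div_rpow (by positivity) hs.le, Real.mul_rpow hy.le hz.le]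
  have e3 : (x * y / (x + z)) ^ (a₁ - 1) =
      x ^ (a₁ - 1) * y ^ (a₁ - 1) / (x + z) ^ (a₁ - 1) := by
    rw [Real.div_rpow (by positivity) hs.le, Real.mul_rpow hx.le hy.le]
  have e2 : (x + z) ^ (a₁ + a₂ - 1) =
      (x + z) ^ (a₁ - 1) * ((x + z) ^ (a₂ - 1) * (x + z)) := by
    rw [show a₁ + a₂ - 1 = (a₁ - 1) + ((a₂ - 1) + 1) by ring, Real.rpow_add hs,
      Real.rpow_add hs, Real.rpow_one]
  have e4 : y ^ (a₁ + a₂ - 1) = y ^ (a₁ - 1) * (y ^ (a₂ - 1) * y) := by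
    rw [show a₁ + a₂ - 1 = (a₁ - 1) + ((a₂ - 1) + 1) by ring, Real.rpow_add hy,
      Real.rpow_add hy, Real.rpow_one]
  have gL : Real.exp (-(x + z)) = Real.exp (-x) * Real.exp (-z) := by
    rw [← Real.exp_add]; ring_nf
  have f1 : Real.exp (-y) =
      Real.exp (-(y * z / (x + z))) * Real.exp (-(x * y / (x + z))) := by
    rw [← Real.exp_add]
    congr 1
    field_simp
    ring
  have hp1 : (0:ℝ) < y ^ (a₂ - 1) := Real.rpow_pos_of_pos hy _
  have hp2 : (0:ℝ) < z ^ (a₂ - 1) := Real.rpow_pos_of_pos hz _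
  have hp3 : (0:ℝ) < x ^ (a₁ - 1) := Real.rpow_pos_of_pos hx _
  have hp4 : (0:ℝ) < y ^ (a₁ - 1) := Real.rpow_pos_of_pos hy _
  have hp5 : (0:ℝ) < (x + z) ^ (a₁ - 1) := Real.rpow_pos_of_pos hs _
  have hp6 : (0:ℝ) < (x + z) ^ (a₂ - 1) := Real.rpow_pos_of_pos hs _
  rw [e1, e2, e3, e4, gL, f1]
  field_simp

end A2Aux
end A2Aux

open A2Aux in
/-- A₂ beta–gamma identity (forward direction): if `t₁, t₂, t₃` are independent with laws
`Gamma(a₁), Gamma(a₁+a₂), Gamma(a₂)`, then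
`(t₂t₃/(t₁+t₃), t₁+t₃, t₁t₂/(t₁+t₃))` is distributed as a triple of independent variables
with laws `Gamma(a₂), Gamma(a₁+a₂), Gamma(a₁)`. -/
theorem A2_beta_gamma_identity
    {Ω : Type*} [MeasureSpace Ω] (P : Measure Ω) [IsProbabilityMeasure P]
    (a₁ a₂ : ℝ) (ha₁ : 0 < a₁) (ha₂ : 0 < a₂)
    (t₁ t₂ t₃ : Ω → ℝ)
    (hlaw : Measure.map (fun ω => (t₁ ω, t₂ ω, t₃ ω)) P =
      (gammaMeasure a₁ 1).prod ((gammaMeasure (a₁ + a₂) 1).prod (gammaMeasure a₂ 1))) :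
    Measure.map (fun ω =>
        (t₂ ω * t₃ ω / (t₁ ω + t₃ ω), t₁ ω + t₃ ω, t₁ ω * t₂ ω / (t₁ ω + t₃ ω))) P =
      (gammaMeasure a₂ 1).prod ((gammaMeasure (a₁ + a₂) 1).prod (gammaMeasure a₁ 1)) := by
  have hA : (0:ℝ) < a₁ + a₂ := by positivity
  haveI i1 := isProbabilityMeasure_gammaMeasure ha₁ one_pos
  haveI i2 := isProbabilityMeasure_gammaMeasure hA one_pos
  haveI i3 := isProbabilityMeasure_gammaMeasure ha₂ one_pos
  haveI : IsProbabilityMeasure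
      ((gammaMeasure a₁ 1).prod ((gammaMeasure (a₁ + a₂) 1).prod (gammaMeasure a₂ 1))) := by
    infer_instance
  -- the triple is a.e. measurable
  have hvec : AEMeasurable (fun ω => (t₁ ω, t₂ ω, t₃ ω)) P := by
    by_contra h
    rw [Measure.map_of_not_aemeasurable h] at hlaw
    have h0 := congrArg (fun m : Measure (ℝ × ℝ × ℝ) => m Set.univ) hlaw
    simp [measure_univ] at h0
  have hcomp : (fun ω =>
      (t₂ ω * t₃ ω / (t₁ ω + t₃ ω), t₁ ω + t₃ ω, t₁ ω * t₂ ω / (t₁ ω + t₃ ω))) =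
      T ∘ (fun ω => (t₁ ω, t₂ ω, t₃ ω)) := rfl
  rw [hcomp, ← AEMeasurable.map_map_of_aemeasurable
    (measurable_T.aemeasurable) hvec, hlaw]
  -- reduce to a change-of-variables statement for the map `T`
  rw [gamma_prod_eq a₁ (a₁ + a₂) a₂ ha₁ hA ha₂, gamma_prod_eq a₂ (a₁ + a₂) a₁ ha₂ hA ha₁]
  haveI : (volume : Measure (ℝ × ℝ × ℝ)).IsAddHaarMeasure := by
    haveI h2 : (volume : Measure (ℝ × ℝ)).IsAddHaarMeasure := by
      rw [Measure.volume_eq_prod]; infer_instance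
    rw [Measure.volume_eq_prod]; infer_instance
  ext A hA'
  rw [Measure.map_apply measurable_T hA',
    withDensity_apply _ (measurable_T hA'), withDensity_apply _ hA',
    setLIntegral_Gd_inter_S a₁ (a₁ + a₂) a₂ (T ⁻¹' A),
    setLIntegral_Gd_inter_S a₂ (a₁ + a₂) a₁ A]
  have hmeas : MeasurableSet (T ⁻¹' A ∩ S) := (measurable_T hA').inter measurableSet_S
  have himg : A ∩ S = T '' (T ⁻¹' A ∩ S) := by
    ext q
    constructor
    · rintro ⟨hqA, hqS⟩
      refine ⟨T q, ⟨?_, T_mem_S hqS⟩, T_T hqS⟩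
      show T (T q) ∈ A
      rw [T_T hqS]
      exact hqA
    · rintro ⟨x, ⟨hxA, hxS⟩, rfl⟩
      exact ⟨hxA, T_mem_S hxS⟩
  rw [himg, lintegral_image_eq_lintegral_abs_det_fderiv_mul volume hmeas
    (fun x hx => (hasFDerivAt_T (by obtain ⟨h1, h2, h3⟩ := hx.2; positivity)).hasFDerivWithinAt)
    (injOn_T.mono Set.inter_subset_right) (Gd a₂ (a₁ + a₂) a₁)]
  refine (setLIntegral_congr_fun hmeas (fun p hp => ?_)).symm
  exact density_identity ha₁ ha₂ hp.2
end

section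
/- (General analytic tropicalization) Let a be a rational subtraction-free expression in k variables, built from variables and positive constants by +, ×, /. Then there exists C > 0 such that for all x ∈ ℝᵏ and all h ∈ (0,1], |-h·log a(e^{-x₁/h},…,e^{-x_k/h}) - [a]_trop(x₁,…,x_k)| ≤ C·h, where [a]_trop is obtained from a by replacing (+,×,/) by (min,+,−) and each positive constant c by 0 (equivalently by its tropical limit). -/
open Real

/-- Subtraction-free rational expressions in `k` variables: variables, positive constants,
sums, products and quotients. -/
inductive SFExpr (k : ℕ) : Type
  | var : Fin k → SFExpr k
  | const : (c : ℝ) → 0 < c → SFExpr k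
  | add : SFExpr k → SFExpr k → SFExpr k
  | mul : SFExpr k → SFExpr k → SFExpr k
  | div : SFExpr k → SFExpr k → SFExpr k

namespace SFExpr

/-- Evaluation of a subtraction-free expression at a point with positive coordinates. -/
noncomputable def eval {k : ℕ} : SFExpr k → (Fin k → ℝ) → ℝ
  | var i, t => t i
  | const c _, _ => c
  | add a b, t => eval a t + eval b t
  | mul a b, t => eval a t * eval b t
  | div a b, t => eval a t / eval b t

/-- Tropical evaluation: `(+, ×, /)` become `(min, +, −)` and constants become `0`. -/
noncomputable def trop {k : ℕ} : SFExpr k → (Fin k → ℝ) → ℝ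
  | var i, x => x i
  | const _ _, _ => 0
  | add a b, x => min (trop a x) (trop b x)
  | mul a b, x => trop a x + trop b x
  | div a b, x => trop a x - trop b x

end SFExpr

lemma SFExpr.eval_pos {k : ℕ} (a : SFExpr k) (t : Fin k → ℝ) (ht : ∀ i, 0 < t i) :
    0 < a.eval t := by
  induction a with
  | var i => exact ht i
  | const c hc => exact hc
  | add a b ha hb => exact add_pos ha hb
  | mul a b ha hb => exact mul_pos ha hb
  | div a b ha hb => exact div_pos ha hb

/-- General analytic tropicalization: for any subtraction-free rational expression `a` in
`k` variables, there is `C > 0` such that for all `x ∈ ℝᵏ` and `h ∈ (0,1]`,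
`|-h log a(e^{-x₁/h}, …, e^{-x_k/h}) - [a]_trop(x)| ≤ C h`. -/
theorem analytic_tropicalization {k : ℕ} (a : SFExpr k) :
    ∃ C : ℝ, 0 < C ∧ ∀ (x : Fin k → ℝ) (h : ℝ), 0 < h → h ≤ 1 →
      |(-(h * Real.log (a.eval (fun i => Real.exp (-(x i) / h))))) - a.trop x| ≤ C * h := by
  induction a with
  | var i =>
    refine ⟨1, one_pos, fun x h hh _ => ?_⟩
    simp only [SFExpr.eval, SFExpr.trop, Real.log_exp]
    rw [neg_div, mul_neg, neg_neg, mul_div_cancel₀ _ (ne_of_gt hh)]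
    simp [le_of_lt hh]
  | const c hc =>
    refine ⟨|Real.log c| + 1, by positivity, fun x h hh _ => ?_⟩
    simp only [SFExpr.eval, SFExpr.trop, sub_zero, abs_neg, abs_mul, abs_of_pos hh]
    nlinarith [abs_nonneg (Real.log c)]
  | mul a b ha hb =>
    obtain ⟨Ca, hCa, Ha⟩ := ha
    obtain ⟨Cb, hCb, Hb⟩ := hb
    refine ⟨Ca + Cb, by positivity, fun x h hh h1 => ?_⟩
    have hpos : ∀ i, (0:ℝ) < Real.exp (-(x i) / h) := fun i => Real.exp_pos _
    simp only [SFExpr.eval, SFExpr.trop]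
    rw [Real.log_mul (ne_of_gt (a.eval_pos _ hpos)) (ne_of_gt (b.eval_pos _ hpos))]
    have h1' := Ha x h hh h1
    have h2' := Hb x h hh h1
    have heq : -(h * (Real.log (a.eval fun i => Real.exp (-(x i) / h))
          + Real.log (b.eval fun i => Real.exp (-(x i) / h)))) - (a.trop x + b.trop x)
        = ((-(h * Real.log (a.eval fun i => Real.exp (-(x i) / h))) - a.trop x)
          + ((-(h * Real.log (b.eval fun i => Real.exp (-(x i) / h))) - b.trop x))) := by ring
    rw [heq]
    calc _ ≤ _ := abs_add_le _ _
      _ ≤ Ca * h + Cb * h := add_le_add h1' h2'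
      _ = (Ca + Cb) * h := by ring
  | div a b ha hb =>
    obtain ⟨Ca, hCa, Ha⟩ := ha
    obtain ⟨Cb, hCb, Hb⟩ := hb
    refine ⟨Ca + Cb, by positivity, fun x h hh h1 => ?_⟩
    have hpos : ∀ i, (0:ℝ) < Real.exp (-(x i) / h) := fun i => Real.exp_pos _
    simp only [SFExpr.eval, SFExpr.trop]
    rw [Real.log_div (ne_of_gt (a.eval_pos _ hpos)) (ne_of_gt (b.eval_pos _ hpos))]
    have h1' := Ha x h hh h1
    have h2' := Hb x h hh h1
    have heq : -(h * (Real.log (a.eval fun i => Real.exp (-(x i) / h))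
          - Real.log (b.eval fun i => Real.exp (-(x i) / h)))) - (a.trop x - b.trop x)
        = ((-(h * Real.log (a.eval fun i => Real.exp (-(x i) / h))) - a.trop x)
          - ((-(h * Real.log (b.eval fun i => Real.exp (-(x i) / h))) - b.trop x))) := by ring
    rw [heq]
    calc _ ≤ _ := abs_sub _ _
      _ ≤ Ca * h + Cb * h := add_le_add h1' h2'
      _ = (Ca + Cb) * h := by ring
  | add a b ha hb =>
    obtain ⟨Ca, hCa, Ha⟩ := ha
    obtain ⟨Cb, hCb, Hb⟩ := hb
    refine ⟨Ca + Cb + 1, by positivity, fun x h hh h1 => ?_⟩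
    have hpos : ∀ i, (0:ℝ) < Real.exp (-(x i) / h) := fun i => Real.exp_pos _
    set A := a.eval fun i => Real.exp (-(x i) / h) with hA
    set B := b.eval fun i => Real.exp (-(x i) / h) with hB
    have hApos : 0 < A := a.eval_pos _ hpos
    have hBpos : 0 < B := b.eval_pos _ hpos
    set u := -(h * Real.log A) with hu
    set v := -(h * Real.log B) with hv
    simp only [SFExpr.eval, SFExpr.trop]
    have hupper : -(h * Real.log (A + B)) ≤ min u v := by
      refine le_min ?_ ?_ <;>
      · apply neg_le_neg
        apply mul_le_mul_of_nonneg_left _ (le_of_lt hh)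
        apply Real.log_le_log (by positivity)
        linarith
    have hlower : min u v - h * Real.log 2 ≤ -(h * Real.log (A + B)) := by
      rcases le_total u v with huv | huv
      · rw [min_eq_left huv]
        have hAB : B ≤ A := by
          have : Real.log B ≤ Real.log A := by
            rw [hu, hv] at huv
            nlinarith
          exact (Real.log_le_log_iff hBpos hApos).mp this
        have : Real.log (A + B) ≤ Real.log 2 + Real.log A := by
          rw [← Real.log_mul (by norm_num) (ne_of_gt hApos)]
          exact Real.log_le_log (by positivity) (by linarith)
        rw [hu]
        nlinarith
      · rw [min_eq_right huv]
        have hAB : A ≤ B := by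
          have : Real.log A ≤ Real.log B := by
            rw [hu, hv] at huv
            nlinarith
          exact (Real.log_le_log_iff hApos hBpos).mp this
        have : Real.log (A + B) ≤ Real.log 2 + Real.log B := by
          rw [← Real.log_mul (by norm_num) (ne_of_gt hBpos)]
          exact Real.log_le_log (by positivity) (by linarith)
        rw [hv]
        nlinarith
    have h2 : Real.log 2 ≤ 1 := by
      have := Real.log_le_sub_one_of_pos (show (0:ℝ) < 2 by norm_num)
      linarith
    have hmin : |min u v - min (a.trop x) (b.trop x)| ≤ (Ca + Cb) * h := by
      refine (abs_min_sub_min_le_max _ _ _ _).trans ?_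
      have := Ha x h hh h1
      have := Hb x h hh h1
      rw [max_le_iff]
      constructor <;> [skip; skip] <;> nlinarith [abs_nonneg (u - a.trop x), abs_nonneg (v - b.trop x)]
    have hmid : |-(h * Real.log (A + B)) - min u v| ≤ h * Real.log 2 := by
      rw [abs_le]
      constructor <;> [linarith; linarith [hupper]]
    calc |-(h * Real.log (A + B)) - min (a.trop x) (b.trop x)|
        ≤ |-(h * Real.log (A + B)) - min u v| + |min u v - min (a.trop x) (b.trop x)| :=
          abs_sub_le _ _ _
      _ ≤ h * Real.log 2 + (Ca + Cb) * h := add_le_add hmid hmin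
      _ ≤ (Ca + Cb + 1) * h := by nlinarith
end

section
/- (A₂ exponential identity, forward direction) Let a₁, a₂ > 0 and t₁, t₂, t₃ be independent exponential random variables with parameters a₁, a₁+a₂, a₂ respectively. Define p₁ = t₂ + t₃ - min(t₁,t₃), p₂ = min(t₁,t₃), p₃ = t₁ + t₂ - min(t₁,t₃). Then (p₁,p₂,p₃) has the same joint law as independent exponential random variables with parameters a₂, a₁+a₂, a₁. -/
open MeasureTheory ProbabilityTheory

namespace A2Aux

open Real Measure
open scoped ENNReal

noncomputable def f (r x : ℝ) : ℝ := if 0 ≤ x then r * Real.exp (-(r * x)) else 0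

lemma f_nonneg {r : ℝ} (hr : 0 ≤ r) (x : ℝ) : 0 ≤ f r x := by
  unfold f; split_ifs
  · positivity
  · exact le_rfl

lemma expPDF_eq_f (r x : ℝ) : exponentialPDF r x = ENNReal.ofReal (f r x) := by
  rw [exponentialPDF_eq]; rfl

lemma mul3exp (c₁ c₂ c₃ u v w u' v' w' : ℝ) (h : u + v + w = u' + v' + w') :
    c₁ * rexp u * (c₂ * rexp v * (c₃ * rexp w)) =
      c₃ * rexp u' * (c₂ * rexp v' * (c₁ * rexp w')) := by
  rw [show c₁ * rexp u * (c₂ * rexp v * (c₃ * rexp w)) = c₁ * c₂ * c₃ * rexp (u + v + w) by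
      rw [Real.exp_add, Real.exp_add]; ring,
    show c₃ * rexp u' * (c₂ * rexp v' * (c₁ * rexp w')) = c₁ * c₂ * c₃ * rexp (u' + v' + w') by
      rw [Real.exp_add, Real.exp_add]; ring, h]

lemma key₁ (a₁ a₂ p q w : ℝ) (h : w ≤ p) :
    f a₁ q * (f (a₁ + a₂) w * f a₂ (p + q - w)) = f a₂ p * (f (a₁ + a₂) q * f a₁ w) := by
  unfold f
  split_ifs <;> first
    | ring1
    | (exfalso; linarith)
    | exact mul3exp _ _ _ _ _ _ _ _ _ (by ring)

lemma key₂ (a₁ a₂ p q w : ℝ) (h : p < w) :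
    f a₁ (q + w - p) * (f (a₁ + a₂) p * f a₂ q) = f a₂ p * (f (a₁ + a₂) q * f a₁ w) := by
  unfold f
  split_ifs <;> first
    | ring1
    | (exfalso; linarith)
    | exact mul3exp _ _ _ _ _ _ _ _ _ (by ring)

lemma triple_pdf_ofReal {r₁ r₂ r₃ : ℝ} (h₁ : 0 ≤ r₁) (h₂ : 0 ≤ r₂) (x y z : ℝ) :
    exponentialPDF r₁ x * (exponentialPDF r₂ y * exponentialPDF r₃ z)
      = ENNReal.ofReal (f r₁ x * (f r₂ y * f r₃ z)) := by
  rw [expPDF_eq_f, expPDF_eq_f, expPDF_eq_f, ENNReal.ofReal_mul (f_nonneg h₁ x),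
    ENNReal.ofReal_mul (f_nonneg h₂ y)]

lemma prod_withDensity {α β : Type*} [MeasurableSpace α] [MeasurableSpace β]
    {μ : Measure α} {ν : Measure β} [SigmaFinite μ] [SigmaFinite ν]
    {f : α → ℝ≥0∞} {g : β → ℝ≥0∞} (hf : Measurable f) (hg : Measurable g)
    (h1 : SigmaFinite (μ.withDensity f)) (h2 : SigmaFinite (ν.withDensity g)) :
    (μ.withDensity f).prod (ν.withDensity g)
      = (μ.prod ν).withDensity (fun p => f p.1 * g p.2) := by
  refine Measure.prod_eq fun s t hs ht => ?_
  rw [withDensity_apply _ (hs.prod ht), ← Measure.prod_restrict,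
    lintegral_prod_mul hf.aemeasurable hg.aemeasurable,
    withDensity_apply _ hs, withDensity_apply _ ht]

lemma map_equiv_withDensity {α : Type*} [MeasurableSpace α] {μ : Measure α}
    (e : α ≃ᵐ α) (he : MeasurePreserving e μ μ) {f : α → ℝ≥0∞} (hf : Measurable f) :
    Measure.map e (μ.withDensity f) = μ.withDensity (fun x => f (e.symm x)) := by
  ext s hs
  rw [MeasurableEquiv.map_apply, withDensity_apply _ (e.measurable hs),
    withDensity_apply _ hs]
  have : ∫⁻ a in s, f (e.symm a) ∂μ = ∫⁻ a in s, f (e.symm a) ∂(Measure.map e μ) := by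
    rw [he.map_eq]
  rw [this, setLIntegral_map (f := fun a => f (e.symm a)) hs
    (hf.comp e.symm.measurable) e.measurable]
  simp

/-- The linear measurable equivalence `(x,y,z) ↦ (y+z-x, x, y)`. -/
noncomputable def eqv : (ℝ × ℝ × ℝ) ≃ᵐ (ℝ × ℝ × ℝ) where
  toEquiv :=
    { toFun := fun p => (p.2.1 + p.2.2 - p.1, p.1, p.2.1)
      invFun := fun q => (q.2.1, q.2.2, q.1 + q.2.1 - q.2.2)
      left_inv := fun p => by obtain ⟨x, y, z⟩ := p; simp
      right_inv := fun q => by obtain ⟨x, y, z⟩ := q; simp }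
  measurable_toFun :=
    ((measurable_snd.fst.add measurable_snd.snd).sub measurable_fst).prodMk
      (measurable_fst.prodMk measurable_snd.fst)
  measurable_invFun :=
    measurable_snd.fst.prodMk (measurable_snd.snd.prodMk
      ((measurable_fst.add measurable_snd.fst).sub measurable_snd.snd))

lemma mp_eqv : MeasurePreserving eqv (volume : Measure (ℝ × ℝ × ℝ)) volume := by
  have vol3 : (volume : Measure (ℝ × ℝ × ℝ))
      = (volume : Measure ℝ).prod ((volume : Measure ℝ).prod volume) := by
    rw [volume_eq_prod, volume_eq_prod]
  set v : Measure ℝ := volume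
  have hc : MeasurePreserving (fun q : ℝ × ℝ => (q.1 + q.2, q.1)) (v.prod v) (v.prod v) := by
    have h1 : MeasurePreserving (fun q : ℝ × ℝ => (q.1, q.1 + q.2)) (v.prod v) (v.prod v) :=
      measurePreserving_prod_add v v
    exact (measurePreserving_swap : MeasurePreserving Prod.swap (v.prod v) (v.prod v)).comp h1
  have hd : MeasurePreserving (fun q : ℝ × ℝ => (q.2 - q.1, q.1)) (v.prod v) (v.prod v) :=
    (measurePreserving_sub_prod v v).comp
      (measurePreserving_swap : MeasurePreserving Prod.swap (v.prod v) (v.prod v))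
  have hassoc := measurePreserving_prodAssoc v v v
  have htot := hassoc.comp ((hd.prod (MeasurePreserving.id v)).comp
    ((hassoc.symm MeasurableEquiv.prodAssoc).comp ((MeasurePreserving.id v).prod hc)))
  have heq : ⇑eqv = (⇑(MeasurableEquiv.prodAssoc : (ℝ × ℝ) × ℝ ≃ᵐ ℝ × ℝ × ℝ)) ∘
      (Prod.map (fun q : ℝ × ℝ => (q.2 - q.1, q.1)) id) ∘
      (⇑(MeasurableEquiv.prodAssoc : (ℝ × ℝ) × ℝ ≃ᵐ ℝ × ℝ × ℝ).symm) ∘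
      (Prod.map id (fun q : ℝ × ℝ => (q.1 + q.2, q.1))) := by
    funext p; rfl
  rw [vol3, show ⇑eqv = _ from heq]
  exact htot

lemma measurable_expPDF (r : ℝ) : Measurable (exponentialPDF r) :=
  (measurable_exponentialPDFReal r).ennreal_ofReal

lemma triple_prod_eq_withDensity {r₁ r₂ r₃ : ℝ} (h₁ : 0 < r₁) (h₂ : 0 < r₂) (h₃ : 0 < r₃) :
    (expMeasure r₁).prod ((expMeasure r₂).prod (expMeasure r₃)) =
      (volume : Measure (ℝ × ℝ × ℝ)).withDensity
        (fun p => exponentialPDF r₁ p.1 *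
          (exponentialPDF r₂ p.2.1 * exponentialPDF r₃ p.2.2)) := by
  have e1 : ∀ r : ℝ, expMeasure r = (volume : Measure ℝ).withDensity (exponentialPDF r) :=
    fun r => rfl
  have sf : ∀ r : ℝ, 0 < r → SigmaFinite ((volume : Measure ℝ).withDensity (exponentialPDF r)) :=
    fun r hr => by
      rw [← e1]
      haveI := isProbabilityMeasure_expMeasure hr
      infer_instance
  have inner := prod_withDensity (μ := (volume : Measure ℝ)) (ν := (volume : Measure ℝ))
    (measurable_expPDF r₂) (measurable_expPDF r₃) (sf r₂ h₂) (sf r₃ h₃)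
  have sfinner : SigmaFinite (((volume : Measure ℝ).prod (volume : Measure ℝ)).withDensity
      (fun p => exponentialPDF r₂ p.1 * exponentialPDF r₃ p.2)) := by
    rw [← inner, ← e1, ← e1]
    haveI := isProbabilityMeasure_expMeasure h₂
    haveI := isProbabilityMeasure_expMeasure h₃
    infer_instance
  have outer := prod_withDensity (μ := (volume : Measure ℝ))
    (ν := (volume : Measure ℝ).prod (volume : Measure ℝ))
    (measurable_expPDF r₁)
    (g := fun p => exponentialPDF r₂ p.1 * exponentialPDF r₃ p.2)
    (((measurable_expPDF r₂).comp measurable_fst).mul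
      ((measurable_expPDF r₃).comp measurable_snd))
    (sf r₁ h₁) sfinner
  rw [e1 r₁, e1 r₂, e1 r₃, inner, outer]
  rfl

end A2Aux

open A2Aux
open scoped ENNReal

/-- A₂ exponential identity (forward direction): if `t₁, t₂, t₃` are independent exponential
variables with parameters `a₁, a₁+a₂, a₂`, then
`(t₂+t₃-min(t₁,t₃), min(t₁,t₃), t₁+t₂-min(t₁,t₃))` is distributed as a triple of
independent exponential variables with parameters `a₂, a₁+a₂, a₁`. -/
theorem A2_exponential_identity
    {Ω : Type*} [MeasureSpace Ω] (P : Measure Ω) [IsProbabilityMeasure P]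
    (a₁ a₂ : ℝ) (ha₁ : 0 < a₁) (ha₂ : 0 < a₂)
    (t₁ t₂ t₃ : Ω → ℝ)
    (hlaw : Measure.map (fun ω => (t₁ ω, t₂ ω, t₃ ω)) P =
      (expMeasure a₁).prod ((expMeasure (a₁ + a₂)).prod (expMeasure a₂))) :
    Measure.map (fun ω =>
        (t₂ ω + t₃ ω - min (t₁ ω) (t₃ ω), min (t₁ ω) (t₃ ω),
         t₁ ω + t₂ ω - min (t₁ ω) (t₃ ω))) P =
      (expMeasure a₂).prod ((expMeasure (a₁ + a₂)).prod (expMeasure a₁)) := by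
  classical
  have hb : (0:ℝ) < a₁ + a₂ := by linarith
  set g : ℝ × ℝ × ℝ → ℝ × ℝ × ℝ := fun p =>
    (p.2.1 + p.2.2 - min p.1 p.2.2, min p.1 p.2.2, p.1 + p.2.1 - min p.1 p.2.2) with hgdef
  have hmin : Measurable fun p : ℝ × ℝ × ℝ => min p.1 p.2.2 :=
    measurable_fst.min measurable_snd.snd
  have hgm : Measurable g :=
    ((measurable_snd.fst.add measurable_snd.snd).sub hmin).prodMk
      (hmin.prodMk ((measurable_fst.add measurable_snd.fst).sub hmin))
  have hf : AEMeasurable (fun ω => (t₁ ω, t₂ ω, t₃ ω)) P := by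
    by_contra h
    have h0 := Measure.map_of_not_aemeasurable h
    rw [hlaw] at h0
    haveI := isProbabilityMeasure_expMeasure ha₁
    haveI := isProbabilityMeasure_expMeasure ha₂
    haveI := isProbabilityMeasure_expMeasure hb
    exact (IsProbabilityMeasure.ne_zero _) h0
  have hcomp : (fun ω =>
      (t₂ ω + t₃ ω - min (t₁ ω) (t₃ ω), min (t₁ ω) (t₃ ω),
       t₁ ω + t₂ ω - min (t₁ ω) (t₃ ω))) = g ∘ (fun ω => (t₁ ω, t₂ ω, t₃ ω)) := rfl
  rw [hcomp, ← AEMeasurable.map_map_of_aemeasurable hgm.aemeasurable hf, hlaw]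
  -- reduce to a statement about measures on ℝ³
  set F : ℝ × ℝ × ℝ → ℝ≥0∞ := fun p =>
    exponentialPDF a₁ p.1 * (exponentialPDF (a₁ + a₂) p.2.1 * exponentialPDF a₂ p.2.2) with hFdef
  set G : ℝ × ℝ × ℝ → ℝ≥0∞ := fun p =>
    exponentialPDF a₂ p.1 * (exponentialPDF (a₁ + a₂) p.2.1 * exponentialPDF a₁ p.2.2) with hGdef
  have hFm : Measurable F :=
    ((measurable_expPDF a₁).comp measurable_fst).mul
      ((((measurable_expPDF (a₁ + a₂)).comp measurable_fst).mul
        ((measurable_expPDF a₂).comp measurable_snd)).comp measurable_snd)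
  rw [triple_prod_eq_withDensity ha₁ hb ha₂, triple_prod_eq_withDensity ha₂ hb ha₁]
  set A : Set (ℝ × ℝ × ℝ) := {p | p.1 ≤ p.2.2} with hAdef
  have hA : MeasurableSet A := measurableSet_le measurable_fst measurable_snd.snd
  have hsplit : (volume : Measure (ℝ × ℝ × ℝ)).withDensity F
      = ((volume : Measure (ℝ × ℝ × ℝ)).withDensity F).restrict A
        + ((volume : Measure (ℝ × ℝ × ℝ)).withDensity F).restrict Aᶜ :=
    (Measure.restrict_add_restrict_compl hA).symm
  have hres1 : ((volume : Measure (ℝ × ℝ × ℝ)).withDensity F).restrict A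
      = (volume : Measure (ℝ × ℝ × ℝ)).withDensity (A.indicator F) := by
    rw [withDensity_indicator hA, restrict_withDensity hA]
  have hres2 : ((volume : Measure (ℝ × ℝ × ℝ)).withDensity F).restrict Aᶜ
      = (volume : Measure (ℝ × ℝ × ℝ)).withDensity (Aᶜ.indicator F) := by
    rw [withDensity_indicator hA.compl, restrict_withDensity hA.compl]
  have hgeq1 : Measure.map g (((volume : Measure (ℝ × ℝ × ℝ)).withDensity F).restrict A)
      = Measure.map (⇑eqv) (((volume : Measure (ℝ × ℝ × ℝ)).withDensity F).restrict A) := by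
    apply Measure.map_congr
    filter_upwards [ae_restrict_mem hA] with p hp
    obtain ⟨x, y, z⟩ := p
    have hxz : x ≤ z := hp
    show (y + z - min x z, min x z, x + y - min x z) = (y + z - x, x, y)
    rw [min_eq_left hxz]
    refine Prod.ext rfl (Prod.ext rfl ?_)
    ring
  have hgeq2 : Measure.map g (((volume : Measure (ℝ × ℝ × ℝ)).withDensity F).restrict Aᶜ)
      = Measure.map (⇑eqv.symm) (((volume : Measure (ℝ × ℝ × ℝ)).withDensity F).restrict Aᶜ)
      := by
    apply Measure.map_congr
    filter_upwards [ae_restrict_mem hA.compl] with p hp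
    obtain ⟨x, y, z⟩ := p
    have hzx : z < x := lt_of_not_ge hp
    show (y + z - min x z, min x z, x + y - min x z) = (y, z, x + y - z)
    rw [min_eq_right hzx.le]
    refine Prod.ext (by ring) rfl
  rw [hsplit, Measure.map_add _ _ hgm, hgeq1, hgeq2, hres1, hres2,
    map_equiv_withDensity eqv mp_eqv (hFm.indicator hA),
    map_equiv_withDensity eqv.symm (mp_eqv.symm eqv) (hFm.indicator hA.compl),
    ← withDensity_add_right (fun x => A.indicator F (eqv.symm x))
      (g := fun x => Aᶜ.indicator F (eqv.symm.symm x))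
      ((hFm.indicator hA.compl).comp eqv.symm.symm.measurable)]
  congr 1
  funext y
  obtain ⟨p, q, w⟩ := y
  simp only [MeasurableEquiv.symm_symm, Pi.add_apply]
  have h1 : eqv.symm (p, q, w) = (q, w, p + q - w) := rfl
  have h2 : eqv (p, q, w) = (q + w - p, p, q) := rfl
  rw [h1, h2]
  rcases le_or_gt w p with hc | hc
  · rw [Set.indicator_of_mem (show ((q, w, p + q - w) : ℝ × ℝ × ℝ) ∈ A from by
        simp only [hAdef, Set.mem_setOf_eq]; linarith),
      Set.indicator_of_notMem (show ((q + w - p, p, q) : ℝ × ℝ × ℝ) ∉ Aᶜ from by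
        simp only [Set.notMem_compl_iff, hAdef, Set.mem_setOf_eq]; linarith),
      add_zero]
    show exponentialPDF a₁ q * (exponentialPDF (a₁ + a₂) w * exponentialPDF a₂ (p + q - w))
      = exponentialPDF a₂ p * (exponentialPDF (a₁ + a₂) q * exponentialPDF a₁ w)
    rw [triple_pdf_ofReal ha₁.le hb.le, triple_pdf_ofReal ha₂.le hb.le]
    exact congrArg ENNReal.ofReal (key₁ a₁ a₂ p q w hc)
  · rw [Set.indicator_of_notMem (show ((q, w, p + q - w) : ℝ × ℝ × ℝ) ∉ A from by
        simp only [hAdef, Set.mem_setOf_eq, not_le]; linarith),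
      Set.indicator_of_mem (show ((q + w - p, p, q) : ℝ × ℝ × ℝ) ∈ Aᶜ from by
        simp only [Set.mem_compl_iff, hAdef, Set.mem_setOf_eq, not_le]; linarith),
      zero_add]
    show exponentialPDF a₁ (q + w - p) * (exponentialPDF (a₁ + a₂) p * exponentialPDF a₂ q)
      = exponentialPDF a₂ p * (exponentialPDF (a₁ + a₂) q * exponentialPDF a₁ w)
    rw [triple_pdf_ofReal ha₁.le hb.le, triple_pdf_ofReal ha₂.le hb.le]
    exact congrArg ENNReal.ofReal (key₂ a₁ a₂ p q w hc)
end

section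
/- (A₂ geometric identity) Let 0 < z₁, z₂ < 1 and let t₁, t₂, t₃ be independent geometric random variables with parameters z₁, z₁z₂, z₂ (i.e. P(t = k) = z^k(1-z) for k ∈ ℕ). Define p₁ = t₂ + t₃ - min(t₁,t₃), p₂ = min(t₁,t₃), p₃ = t₁ + t₂ - min(t₁,t₃) (values in ℕ). Then (p₁,p₂,p₃) has the same joint law as independent geometric random variables with parameters z₂, z₁z₂, z₁. -/
open MeasureTheory

/-- A₂ geometric identity: if `t₁, t₂, t₃` are independent geometric variables with
parameters `z₁, z₁z₂, z₂` (i.e. `P(t = k) = z^k (1-z)`), then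
`(t₂+t₃-min(t₁,t₃), min(t₁,t₃), t₁+t₂-min(t₁,t₃))` is distributed as a triple of
independent geometric variables with parameters `z₂, z₁z₂, z₁`. -/
theorem A2_geometric_identity
    {Ω : Type*} [MeasureSpace Ω] (P : Measure Ω) [IsProbabilityMeasure P]
    (z₁ z₂ : ℝ) (hz₁ : 0 < z₁) (hz₁' : z₁ < 1) (hz₂ : 0 < z₂) (hz₂' : z₂ < 1)
    (t₁ t₂ t₃ : Ω → ℕ)
    (hlaw : ∀ k₁ k₂ k₃ : ℕ,
      P {ω | t₁ ω = k₁ ∧ t₂ ω = k₂ ∧ t₃ ω = k₃} =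
        ENNReal.ofReal (z₁ ^ k₁ * (1 - z₁)) *
        ENNReal.ofReal ((z₁ * z₂) ^ k₂ * (1 - z₁ * z₂)) *
        ENNReal.ofReal (z₂ ^ k₃ * (1 - z₂))) :
    ∀ k₁ k₂ k₃ : ℕ,
      P {ω | t₂ ω + t₃ ω - min (t₁ ω) (t₃ ω) = k₁ ∧ min (t₁ ω) (t₃ ω) = k₂ ∧
             t₁ ω + t₂ ω - min (t₁ ω) (t₃ ω) = k₃} =
        ENNReal.ofReal (z₂ ^ k₁ * (1 - z₂)) *
        ENNReal.ofReal ((z₁ * z₂) ^ k₂ * (1 - z₁ * z₂)) *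
        ENNReal.ofReal (z₁ ^ k₃ * (1 - z₁)) := by
  intro k₁ k₂ k₃
  have h1 : (0:ℝ) ≤ 1 - z₁ := by linarith
  have h2 : (0:ℝ) ≤ 1 - z₂ := by linarith
  have h12 : (0:ℝ) ≤ 1 - z₁ * z₂ := by nlinarith
  rcases le_or_gt k₃ k₁ with h | h
  · obtain ⟨d, rfl⟩ : ∃ d, k₁ = k₃ + d := ⟨k₁ - k₃, by omega⟩
    have hset : {ω | t₂ ω + t₃ ω - min (t₁ ω) (t₃ ω) = k₃ + d ∧ min (t₁ ω) (t₃ ω) = k₂ ∧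
             t₁ ω + t₂ ω - min (t₁ ω) (t₃ ω) = k₃} =
        {ω | t₁ ω = k₂ ∧ t₂ ω = k₃ ∧ t₃ ω = k₂ + d} := by
      ext ω; simp only [Set.mem_setOf_eq]; omega
    rw [hset, hlaw]
    rw [← ENNReal.ofReal_mul (by positivity), ← ENNReal.ofReal_mul (by positivity),
        ← ENNReal.ofReal_mul (by positivity), ← ENNReal.ofReal_mul (by positivity)]
    congr 1
    rw [mul_pow, mul_pow, pow_add, pow_add]
    ring
  · obtain ⟨d, rfl⟩ : ∃ d, k₃ = k₁ + d := ⟨k₃ - k₁, by omega⟩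
    have hset : {ω | t₂ ω + t₃ ω - min (t₁ ω) (t₃ ω) = k₁ ∧ min (t₁ ω) (t₃ ω) = k₂ ∧
             t₁ ω + t₂ ω - min (t₁ ω) (t₃ ω) = k₁ + d} =
        {ω | t₁ ω = k₂ + d ∧ t₂ ω = k₁ ∧ t₃ ω = k₂} := by
      ext ω; simp only [Set.mem_setOf_eq]; omega
    rw [hset, hlaw]
    rw [← ENNReal.ofReal_mul (by positivity), ← ENNReal.ofReal_mul (by positivity),
        ← ENNReal.ofReal_mul (by positivity), ← ENNReal.ofReal_mul (by positivity)]
    congr 1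
    rw [mul_pow, mul_pow, pow_add, pow_add]
    ring
end
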